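/- Let Φ : ℝ^{N₁} × ℝ^{N₂} → ℂ satisfy the rapid decay bound |Φ(x,y)| ≤ C_M (1 + |x| + |y|)^{−M} for some M > N₁ + N₂/ρ + 1, with 0 < ρ < 1, and define Φ_δ(x,y) = δ^{−N₁} δ^{−N₂/ρ} Φ(x/δ, y/δ^{1/ρ}). Then for (x,y) with 0 < δ ≤ |x|, one has ∫₀^{|x|} |Φ_δ(x,y)|² dδ/δ ≤ A·|x|^{−2N₁ − 2N₂/ρ} with A depending only on C_M, M, N₁, N₂, ρ. -/

import Mathlib

/-!
Since `1 + |δ⁻¹ x| + |·| ≥ |x| / δ`, the decay of `Φ` gives `|Φ(x/δ, ·)| ≤ C (δ / |x|)^M`, so the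
integrand is at most `C² |x|^(-2M) δ^(2(M - a) - 1)` with `a = N₁ + N₂/ρ`. As `M > a`, this power
of `δ` is integrable at `0`, and integrating up to `|x|` gives `C² / (2(M - a)) · |x|^(-2a)`.
-/

open MeasureTheory Set

lemma norm_comp_inv_smul_le {E F G : Type*} [NormedAddCommGroup E] [NormedSpace ℝ E]
    [NormedAddCommGroup F] [NormedAddCommGroup G] {Φ : E × F → G} {C M δ : ℝ} (hM : 0 ≤ M)
    (hΦ : ∀ p, ‖Φ p‖ ≤ C * (1 + ‖p.1‖ + ‖p.2‖) ^ (-M)) (hδ : 0 < δ) {x : E} (hx : x ≠ 0)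
    (v : F) : ‖Φ (δ⁻¹ • x, v)‖ ≤ C * ‖x‖ ^ (-M) * δ ^ M := by
  have hx' : 0 < ‖x‖ := norm_pos_iff.mpr hx
  have hC : 0 ≤ C :=
    nonneg_of_mul_nonneg_left ((norm_nonneg _).trans (hΦ (0, 0)))
      (Real.rpow_pos_of_pos (by positivity) _)
  have hnorm : ‖δ⁻¹ • x‖ = δ⁻¹ * ‖x‖ := by
    rw [norm_smul, Real.norm_of_nonneg (inv_nonneg.mpr hδ.le)]
  calc ‖Φ (δ⁻¹ • x, v)‖ ≤ C * (1 + ‖δ⁻¹ • x‖ + ‖v‖) ^ (-M) := hΦ _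
    _ ≤ C * (δ⁻¹ * ‖x‖) ^ (-M) :=
        mul_le_mul_of_nonneg_left (Real.rpow_le_rpow_of_nonpos (by positivity)
          (by rw [hnorm]; linarith [norm_nonneg v]) (neg_nonpos.mpr hM)) hC
    _ = C * ‖x‖ ^ (-M) * δ ^ M := by
        rw [Real.mul_rpow (by positivity) hx'.le, Real.inv_rpow hδ.le, ← Real.rpow_neg hδ.le,
          neg_neg]
        ring

lemma norm_rpow_smul_sq_div_le {G : Type*} [NormedAddCommGroup G] [NormedSpace ℝ G]
    {a K M δ : ℝ} {z : G} (hδ : 0 < δ) (hz : ‖z‖ ≤ K * δ ^ M) :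
    ‖δ ^ (-a) • z‖ ^ 2 / δ ≤ K ^ 2 * δ ^ (2 * (M - a) - 1) := by
  have hsq : ∀ p : ℝ, (δ ^ p) ^ 2 = δ ^ (2 * p) := fun p => by
    rw [← Real.rpow_mul_natCast hδ.le, mul_comm]; norm_num
  calc ‖δ ^ (-a) • z‖ ^ 2 / δ = (δ ^ (-a)) ^ 2 * ‖z‖ ^ 2 / δ := by
        rw [norm_smul, Real.norm_of_nonneg (by positivity), mul_pow]
    _ ≤ (δ ^ (-a)) ^ 2 * (K * δ ^ M) ^ 2 / δ := by
        gcongr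
    _ = K ^ 2 * δ ^ (2 * (M - a) - 1) := by
        rw [mul_pow, hsq, hsq, mul_neg, Real.rpow_sub_one hδ.ne', mul_sub, sub_eq_neg_add,
          Real.rpow_add hδ]
        ring

lemma setIntegral_Ioc_le_of_le_rpow {f : ℝ → ℝ} {K b β : ℝ} (hb : 0 ≤ b) (hβ : 0 < β)
    (hf₀ : ∀ δ ∈ Ioc 0 b, 0 ≤ f δ) (hf : ∀ δ ∈ Ioc 0 b, f δ ≤ K * δ ^ (β - 1)) :
    ∫ δ in Ioc 0 b, f δ ≤ K * (b ^ β / β) := by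
  have hβ' : -1 < β - 1 := by linarith
  have hint : IntegrableOn (fun δ : ℝ => K * δ ^ (β - 1)) (Ioc 0 b) :=
    ((intervalIntegrable_iff_integrableOn_Ioc_of_le hb).mp
      (intervalIntegral.intervalIntegrable_rpow' hβ')).const_mul K
  calc ∫ δ in Ioc 0 b, f δ ≤ ∫ δ in Ioc 0 b, K * δ ^ (β - 1) :=
        setIntegral_mono_of_nonneg hf₀ hf hint
    _ = K * (b ^ β / β) := by
        rw [integral_const_mul, ← intervalIntegral.integral_of_le hb, integral_rpow (.inl hβ'),
          sub_add_cancel, Real.zero_rpow hβ.ne', sub_zero]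

theorem stmt_9_general (N₁ N₂ : ℕ) (ρ : ℝ) (hρ₀ : 0 < ρ)
    (Φ : EuclideanSpace ℝ (Fin N₁) × EuclideanSpace ℝ (Fin N₂) → ℂ)
    (M CM : ℝ) (hM : (N₁ : ℝ) + (N₂ : ℝ) / ρ + 1 < M)
    (hΦ : ∀ p, ‖Φ p‖ ≤ CM * (1 + ‖p.1‖ + ‖p.2‖) ^ (-M)) :
    ∃ A : ℝ, ∀ (x : EuclideanSpace ℝ (Fin N₁)) (y : EuclideanSpace ℝ (Fin N₂)),
      x ≠ 0 →
        (∫ δ in Set.Ioc (0 : ℝ) ‖x‖,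
          ‖(δ ^ (-(N₁ : ℝ)) * δ ^ (-(N₂ : ℝ) / ρ)) •
            Φ (δ⁻¹ • x, (δ ^ (-(1 / ρ)) : ℝ) • y)‖ ^ 2 / δ)
          ≤ A * ‖x‖ ^ (-2 * (N₁ : ℝ) - 2 * (N₂ : ℝ) / ρ) := by
  set a : ℝ := N₁ + N₂ / ρ with ha
  have ha₀ : 0 ≤ a := by positivity
  have hM₀ : 0 ≤ M := by linarith
  refine ⟨CM ^ 2 / (2 * (M - a)), fun x y hx => ?_⟩
  have hx' : 0 < ‖x‖ := norm_pos_iff.mpr hx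
  calc _ ≤ (CM * ‖x‖ ^ (-M)) ^ 2 * (‖x‖ ^ (2 * (M - a)) / (2 * (M - a))) := by
        refine setIntegral_Ioc_le_of_le_rpow hx'.le (by linarith)
          (fun δ hδ => div_nonneg (sq_nonneg _) hδ.1.le) fun δ ⟨hδ, _⟩ => ?_
        rw [← Real.rpow_add hδ, show -(N₁ : ℝ) + -(N₂ : ℝ) / ρ = -a by ring]
        exact norm_rpow_smul_sq_div_le hδ (norm_comp_inv_smul_le hM₀ hΦ hδ hx _)
    _ = CM ^ 2 / (2 * (M - a)) * ‖x‖ ^ (-2 * (N₁ : ℝ) - 2 * (N₂ : ℝ) / ρ) := by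
        rw [mul_pow, ← Real.rpow_mul_natCast hx'.le, mul_div_assoc', mul_assoc,
          ← Real.rpow_add hx', ha]
        ring_nf

theorem stmt_9 (N₁ N₂ : ℕ) (ρ : ℝ) (hρ₀ : 0 < ρ) (hρ₁ : ρ < 1)
    (Φ : EuclideanSpace ℝ (Fin N₁) × EuclideanSpace ℝ (Fin N₂) → ℂ)
    (M CM : ℝ) (hM : (N₁ : ℝ) + (N₂ : ℝ) / ρ + 1 < M)
    (hΦ : ∀ p, ‖Φ p‖ ≤ CM * (1 + ‖p.1‖ + ‖p.2‖) ^ (-M)) :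
    ∃ A : ℝ, ∀ (x : EuclideanSpace ℝ (Fin N₁)) (y : EuclideanSpace ℝ (Fin N₂)),
      x ≠ 0 →
        (∫ δ in Set.Ioc (0 : ℝ) ‖x‖,
          ‖(δ ^ (-(N₁ : ℝ)) * δ ^ (-(N₂ : ℝ) / ρ)) •
            Φ (δ⁻¹ • x, (δ ^ (-(1 / ρ)) : ℝ) • y)‖ ^ 2 / δ)
          ≤ A * ‖x‖ ^ (-2 * (N₁ : ℝ) - 2 * (N₂ : ℝ) / ρ) :=
  stmt_9_general N₁ N₂ ρ hρ₀ Φ M CM hM hΦ
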